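/- arXiv:1607.00819 — 2 statements merged into one kernel-verified Lean document; each statement's English description precedes it below -/
import Mathlib

section
/- Let (A, R, D) be a strongly consistent EAFC and ADF^EAFC its corresponding ADF. Then: X ⊆ A is a conflict-free extension of (A, R, D) iff it is conflict-free in ADF^EAFC; X is a stable extension of (A, R, D) iff it is a model of ADF^EAFC; X is the grounded extension of (A, R, D) iff it is the acyclic grounded extension of ADF^EAFC; and for σ ∈ {admissible, complete, preferred}, X is a σ-extension of (A, R, D) iff it is a ca₂-σ-extension of ADF^EAFC. -/
open Classical

universe u

namespace Dialectical

variable {α : Type u}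

/-! ### Two-valued (partial) interpretations -/

/-- A partial two-valued interpretation: `some true` = t, `some false` = f, `none` = undefined. -/
abbrev Interp (α : Type u) := α → Option Bool

/-- The domain of an interpretation. -/
def idom (v : Interp α) : Set α := {a | v a ≠ none}

/-- The set of arguments mapped to t. -/
def tset (v : Interp α) : Set α := {a | v a = some true}

/-- The set of arguments mapped to f. -/
def fset (v : Interp α) : Set α := {a | v a = some false}

/-- `w` is a completion of `v` to the set `Z`. -/
def Completion (v w : Interp α) (Z : Set α) : Prop :=
  idom w = Z ∧ ∀ a ∈ idom v, w a = v a

/-- The interpretation assigning t on `T` and f on `F' \ T`. -/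
noncomputable def mkInterp (T F' : Set α) : Interp α :=
  fun a => if a ∈ T then some true else if a ∈ F' then some false else none

/-! ### Abstract dialectical frameworks -/

/-- An abstract dialectical framework: links and acceptance conditions
(`true` = in, `false` = out). -/
structure ADF (α : Type u) where
  L : α → α → Prop
  C : α → Set α → Bool

namespace ADF

variable (D : ADF α)

/-- The parents of an argument. -/
def par (a : α) : Set α := {p | D.L p a}

/-- Evaluating the acceptance condition of `s` under an interpretation. -/
def evalCond (s : α) (w : Interp α) : Bool := D.C s (tset w ∩ D.par s)

/-- `s` is decisively in w.r.t. `v`. -/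
def DecisivelyIn (v : Interp α) (s : α) : Prop :=
  ∀ w : Interp α, Completion v w (idom v ∪ D.par s) → D.evalCond s w = true

/-- `s` is decisively out w.r.t. `v`. -/
def DecisivelyOut (v : Interp α) (s : α) : Prop :=
  ∀ w : Interp α, Completion v w (idom v ∪ D.par s) → D.evalCond s w = false

/-- `v` is a minimal decisively in interpretation for `s` (`v ∈ min_dec(in,s)`). -/
def MinDecIn (v : Interp α) (s : α) : Prop :=
  D.DecisivelyIn v s ∧
  ∀ w : Interp α, D.DecisivelyIn w s → tset w ⊆ tset v → fset w ⊆ fset v →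
    tset w = tset v ∧ fset w = fset v

/-- `pd` is a positive dependency function on `X`. -/
def PDFun (X : Set α) (pd : α → Option (Interp α)) : Prop :=
  ∀ a ∈ X,
    (∀ v, pd a = some v → D.MinDecIn v a ∧ tset v ⊆ X) ∧
    (pd a = none → ¬ ∃ v, D.MinDecIn v a ∧ tset v ⊆ X)

end ADF

/-- The subset of `X` on which `pd` is non-null. -/
def soundDom (X : Set α) (pd : α → Option (Interp α)) : Set α :=
  {a ∈ X | pd a ≠ none}

namespace ADF
variable (D : ADF α)

/-- `pd` is a maximally sound pd-function of `X`. -/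
def MaxSound (X : Set α) (pd : α → Option (Interp α)) : Prop :=
  D.PDFun X pd ∧
  ¬ ∃ (X'' : Set α) (pd' : α → Option (Interp α)),
      D.PDFun X'' pd' ∧ (∀ a ∈ X'', pd' a ≠ none) ∧
      soundDom X pd ⊂ X'' ∧ X'' ⊆ X ∧
      ∀ a ∈ soundDom X pd, pd' a = pd a

end ADF

/-- The t-part of the interpretation assigned by `pd` to `a`. -/
def pdT (pd : α → Option (Interp α)) (a : α) : Set α :=
  {b | ∃ v, pd a = some v ∧ b ∈ tset v}

/-- The f-part of the interpretation assigned by `pd` to `a`. -/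
def pdF (pd : α → Option (Interp α)) (a : α) : Set α :=
  {b | ∃ v, pd a = some v ∧ b ∈ fset v}

/-- `(Fs, G, B)` is a partially acyclic positive dependency evaluation for `x`
based on the pd-function `pd` of `X`. -/
def IsPAEvalWith (pd : α → Option (Interp α)) (X : Set α)
    (x : α) (Fs : Set α) (G : List α) (B : Set α) : Prop :=
  (∀ a ∈ G, a ∉ Fs) ∧ G.Nodup ∧
  x ∈ X ∧ Fs ⊆ X ∧ (∀ a ∈ G, a ∈ X) ∧
  (∀ a ∈ Fs, pd a ≠ none) ∧ (∀ a ∈ G, pd a ≠ none) ∧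
  (G = [] → x ∈ Fs) ∧ (G ≠ [] → G.getLast? = some x) ∧
  (∀ i : ℕ, ∀ h : i < G.length,
      pdT pd (G.get ⟨i, h⟩) ⊆
        Fs ∪ {b | ∃ j : ℕ, ∃ hj : j < G.length, j < i ∧ G.get ⟨j, hj⟩ = b}) ∧
  (∀ a ∈ Fs, pdT pd a ⊆ Fs) ∧
  (∀ a ∈ Fs, ∃ b ∈ Fs, a ∈ pdT pd b) ∧
  B = (⋃ a ∈ Fs, pdF pd a) ∪ ⋃ a ∈ {c | c ∈ G}, pdF pd a

namespace ADF
variable (D : ADF α)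

/-- `(Fs, G, B)` is a partially acyclic positive dependency evaluation for `x` on `X`. -/
def PAEval (X : Set α) (x : α) (Fs : Set α) (G : List α) (B : Set α) : Prop :=
  ∃ pd, D.MaxSound X pd ∧ IsPAEvalWith pd X x Fs G B

/-- `(G, B)` is an acyclic positive dependency evaluation for `x` on `X`. -/
def AcyclicEval (X : Set α) (x : α) (G : List α) (B : Set α) : Prop :=
  D.PAEval X x ∅ G B

/-- The standard discarded set `X⁺`. -/
def stdDiscarded (X : Set α) : Set α :=
  {a | ∀ Fs G B, D.PAEval Set.univ a Fs G B → (B ∩ X).Nonempty}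

/-- The partially acyclic discarded set `X^{p+}`. -/
def pDiscarded (X : Set α) : Set α :=
  {a | ¬ ∃ Fs G B, D.PAEval Set.univ a Fs G B ∧ Fs ⊆ X ∧ B ∩ X = ∅}

/-- The acyclic discarded set `X^{a+}`. -/
def aDiscarded (X : Set α) : Set α :=
  {a | ∀ G B, D.AcyclicEval Set.univ a G B → (B ∩ X).Nonempty}

/-- The standard range of `X`. -/
noncomputable def stdRange (X : Set α) : Interp α := mkInterp X (D.stdDiscarded X \ X)

/-- The partially acyclic range of `X`. -/
noncomputable def pRange (X : Set α) : Interp α := mkInterp X (D.pDiscarded X \ X)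

/-- The acyclic range of `X`. -/
noncomputable def aRange (X : Set α) : Interp α := mkInterp X (D.aDiscarded X \ X)

/-- Conflict-freeness in an ADF. -/
def ConflictFree (X : Set α) : Prop := ∀ s ∈ X, D.C s (X ∩ D.par s) = true

/-- pd-acyclic conflict-freeness in an ADF. -/
def PDAcyclicCF (X : Set α) : Prop :=
  ∀ a ∈ X, ∃ G B, D.AcyclicEval X a G B ∧ B ∩ X = ∅

def CCAdmissible (X : Set α) : Prop :=
  D.ConflictFree X ∧ ∀ e ∈ X, D.DecisivelyIn (D.stdRange X) e

def CA2Admissible (X : Set α) : Prop :=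
  D.ConflictFree X ∧ ∀ e ∈ X, D.DecisivelyIn (D.pRange X) e

def AAAdmissible (X : Set α) : Prop :=
  D.PDAcyclicCF X ∧ ∀ e ∈ X, D.DecisivelyIn (D.aRange X) e

def CCComplete (X : Set α) : Prop :=
  D.CCAdmissible X ∧ ∀ e, D.DecisivelyIn (D.stdRange X) e → e ∈ X

def CA2Complete (X : Set α) : Prop :=
  D.CA2Admissible X ∧ ∀ e, D.DecisivelyIn (D.pRange X) e → e ∈ X

def AAComplete (X : Set α) : Prop :=
  D.AAAdmissible X ∧ ∀ e, D.DecisivelyIn (D.aRange X) e → e ∈ X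

def CCPreferred (X : Set α) : Prop :=
  D.CCAdmissible X ∧ ∀ Y, D.CCAdmissible Y → X ⊆ Y → X = Y

def CA2Preferred (X : Set α) : Prop :=
  D.CA2Admissible X ∧ ∀ Y, D.CA2Admissible Y → X ⊆ Y → X = Y

def AAPreferred (X : Set α) : Prop :=
  D.AAAdmissible X ∧ ∀ Y, D.AAAdmissible Y → X ⊆ Y → X = Y

/-- `X` is a model of the ADF. -/
def IsModel (X : Set α) : Prop :=
  D.ConflictFree X ∧ ∀ a, a ∉ X → D.C a (X ∩ D.par a) = false

/-- `X` is a stable extension of the ADF. -/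
def IsStable (X : Set α) : Prop :=
  D.PDAcyclicCF X ∧ D.aDiscarded X = Xᶜ

/-- `X` is the grounded extension (the least cc-complete extension). -/
def IsGrounded (X : Set α) : Prop :=
  D.CCComplete X ∧ ∀ Y, D.CCComplete Y → X ⊆ Y

/-- `X` is the acyclic grounded extension (the least aa-complete extension). -/
def IsAcyclicGrounded (X : Set α) : Prop :=
  D.AAComplete X ∧ ∀ Y, D.AAComplete Y → X ⊆ Y

/-- The link `(r,s)` is supporting. -/
def Supporting (r s : α) : Prop :=
  ¬ ∃ R' ⊆ D.par s, D.C s R' = true ∧ D.C s (R' ∪ {r}) = false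

/-- The link `(r,s)` is attacking. -/
def Attacking (r s : α) : Prop :=
  ¬ ∃ R' ⊆ D.par s, D.C s R' = false ∧ D.C s (R' ∪ {r}) = true

/-- Bipolar ADFs. -/
def IsBADF : Prop := ∀ r s, D.L r s → D.Supporting r s ∨ D.Attacking r s

/-- Positive dependency acyclic ADFs (AADF⁺): every partially acyclic evaluation is acyclic. -/
def IsAADFplus : Prop := ∀ X x Fs G B, D.PAEval X x Fs G B → Fs = ∅

end ADF

/-! ### Frameworks with sets of attacking arguments (SETAFs) -/

/-- A framework with sets of attacking arguments. -/
structure SETAF (α : Type u) where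
  R : Set α → α → Prop
  nonempty_of_R : ∀ S a, R S a → S.Nonempty

namespace SETAF

variable (sf : SETAF α)

/-- `X` is conflict-free in the SETAF. -/
def ConflictFree (X : Set α) : Prop := ¬ ∃ S ⊆ X, ∃ a ∈ X, sf.R S a

/-- The discarded set of `X` in the SETAF. -/
def discarded (X : Set α) : Set α := {b | ∃ S ⊆ X, sf.R S b}

/-- `X` defends `a` in the SETAF. -/
def Defends (X : Set α) (a : α) : Prop :=
  ∀ S, sf.R S a → ∃ s ∈ S, s ∈ sf.discarded X

def Admissible (X : Set α) : Prop := sf.ConflictFree X ∧ ∀ a ∈ X, sf.Defends X a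

def Complete (X : Set α) : Prop := sf.Admissible X ∧ ∀ a, sf.Defends X a → a ∈ X

def Preferred (X : Set α) : Prop :=
  sf.Admissible X ∧ ∀ Y, sf.Admissible Y → X ⊆ Y → X = Y

/-- `X` is the grounded extension: the least complete extension. -/
def IsGrounded (X : Set α) : Prop := sf.Complete X ∧ ∀ Y, sf.Complete Y → X ⊆ Y

def Stable (X : Set α) : Prop := sf.ConflictFree X ∧ sf.discarded X = Xᶜ

/-- The ADF corresponding to a SETAF. -/
noncomputable def toADF : ADF α where
  L x y := ∃ B : Set α, x ∈ B ∧ sf.R B y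
  C a B := decide (¬ ∃ S, sf.R S a ∧ S ⊆ B)

end SETAF

/-! ### Extended argumentation frameworks with collective defense attacks (EAFCs) -/

/-- An EAFC: binary attacks `R` and collective defense attacks `D` on attacks. -/
structure EAFC (α : Type u) where
  R : α → α → Prop
  D : Set α → α → α → Prop
  nonempty_of_D : ∀ C a b, D C a b → C.Nonempty
  attack_of_D : ∀ C a b, D C a b → R a b

namespace EAFC

variable (E : EAFC α)

/-- `a` defeats `b` w.r.t. `X`. -/
def Defeats (X : Set α) (a b : α) : Prop :=
  E.R a b ∧ ¬ ∃ C ⊆ X, E.D C a b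

/-- `RS` is a reinstatement set on `X` for the defeat of `b` by `a`. -/
def Reinstatement (X : Set α) (RS : Set (α × α)) (a b : α) : Prop :=
  RS.Finite ∧
  (∀ p ∈ RS, p.1 ∈ X ∧ E.Defeats X p.1 p.2) ∧
  (a, b) ∈ RS ∧
  ∀ p ∈ RS, ∀ C : Set α, E.D C p.1 p.2 → ∃ q ∈ RS, q.2 ∈ C

/-- The discarded set `X⁺` of `X` in the EAFC. -/
def discarded (X : Set α) : Set α :=
  {b | ∃ a ∈ X, E.Defeats X a b ∧ ∃ RS, E.Reinstatement X RS a b}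

/-- `X` defends `a` in the EAFC. -/
def Defends (X : Set α) (a : α) : Prop :=
  ∀ b, E.Defeats X b a → b ∈ E.discarded X

/-- `X` is conflict-free in the EAFC. -/
def ConflictFree (X : Set α) : Prop := ¬ ∃ a ∈ X, ∃ b ∈ X, E.Defeats X a b

def Admissible (X : Set α) : Prop := E.ConflictFree X ∧ ∀ a ∈ X, E.Defends X a

def Complete (X : Set α) : Prop := E.Admissible X ∧ ∀ a, E.Defends X a → a ∈ X

def Preferred (X : Set α) : Prop :=
  E.Admissible X ∧ ∀ Y, E.Admissible Y → X ⊆ Y → X = Y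

def Stable (X : Set α) : Prop :=
  E.ConflictFree X ∧ ∀ b, b ∉ X → ∃ a ∈ X, E.Defeats X a b

/-- The characteristic function of the EAFC. -/
def charFun (X : Set α) : Set α := {a | E.Defends X a}

/-- The grounded extension of the EAFC. -/
def grounded : Set α := ⋃ i : ℕ, E.charFun^[i] ∅

/-- Every argument has finitely many attackers, every attack finitely many defense attackers. -/
def Finitary : Prop :=
  (∀ a, {b | E.R b a}.Finite) ∧ ∀ a b, {C | E.D C a b}.Finite

/-- Strong consistency of an EAFC. -/
def StronglyConsistent : Prop :=
  ¬ ∃ (x y z : α) (X : Set α), E.R x y ∧ x ∈ X ∧ E.D X z y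

/-- The EAFC is bounded hierarchical. -/
def BoundedHierarchical : Prop :=
  ∃ n : ℕ, ∃ hn : 0 < n,
    ∃ (As : Fin n → Set α) (Rs : Fin n → α → α → Prop)
      (Ds : Fin n → Set α → α → α → Prop),
      (∀ C a b, ¬ Ds ⟨n - 1, Nat.sub_lt hn one_pos⟩ C a b) ∧
      (Set.univ = ⋃ i, As i) ∧
      (∀ a b, E.R a b ↔ ∃ i, Rs i a b) ∧
      (∀ C a b, E.D C a b ↔ ∃ i, Ds i C a b) ∧
      (∀ i a b, Rs i a b → a ∈ As i ∧ b ∈ As i) ∧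
      (∀ i C a b, Ds i C a b → Rs i a b ∧
        ∃ h : (i : ℕ) + 1 < n, C ⊆ As ⟨(i : ℕ) + 1, h⟩)

/-- The ADF corresponding to a strongly consistent EAFC. -/
noncomputable def toADF : ADF α where
  L a b := E.R a b ∨ ∃ (c : α) (X : Set α), a ∈ X ∧ E.D X c b
  C a B := decide (¬ ∃ x ∈ B, E.R x a ∧ ¬ ∃ B' ⊆ B, E.D B' x a)

end EAFC

/-! ### Argumentation frameworks with necessities (AFNs) -/

/-- An AFN: binary attacks `R` and necessity relation `N`. -/
structure AFN (α : Type u) where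
  R : α → α → Prop
  N : Set α → α → Prop
  nonempty_of_N : ∀ B a, N B a → B.Nonempty

namespace AFN

variable (fn : AFN α)

/-- `G` is a powerful sequence for `a` on `X`. -/
def PowerfulSeq (X : Set α) (G : List α) (a : α) : Prop :=
  G ≠ [] ∧ (∀ b ∈ G, b ∈ X) ∧ G.getLast? = some a ∧
  ∀ i : ℕ, ∀ h : i < G.length, ∀ B : Set α, fn.N B (G.get ⟨i, h⟩) →
    ∃ j : ℕ, ∃ hj : j < G.length, j < i ∧ G.get ⟨j, hj⟩ ∈ B

/-- `a` is powerful in `X`. -/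
def Powerful (X : Set α) (a : α) : Prop :=
  a ∈ X ∧ ∃ G, fn.PowerfulSeq X G a

/-- `X` is coherent. -/
def Coherent (X : Set α) : Prop := ∀ a ∈ X, fn.Powerful X a

/-- The discarded set `X^att` of `X` in the AFN. -/
def discardedAtt (X : Set α) : Set α :=
  {a | ∀ C, fn.Coherent C → a ∈ C → ∃ c ∈ C, ∃ e ∈ X, fn.R e c}

/-- `X` is conflict-free in the AFN. -/
def ConflictFree (X : Set α) : Prop := ¬ ∃ a ∈ X, ∃ b ∈ X, fn.R a b

/-- `X` is strongly coherent. -/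
def StronglyCoherent (X : Set α) : Prop := fn.ConflictFree X ∧ fn.Coherent X

/-- The deactivated set `X⁺` of `X` in the AFN. -/
def deactivated (X : Set α) : Set α :=
  {a | (∃ e ∈ X, fn.R e a) ∨ ∃ B, fn.N B a ∧ X ∩ B = ∅}

/-- `X` defends `a` in the AFN. -/
def Defends (X : Set α) (a : α) : Prop :=
  fn.Coherent (X ∪ {a}) ∧ ∀ b, fn.R b a → b ∈ fn.discardedAtt X

def Admissible (X : Set α) : Prop := fn.StronglyCoherent X ∧ ∀ a ∈ X, fn.Defends X a

def Complete (X : Set α) : Prop := fn.Admissible X ∧ ∀ a, fn.Defends X a → a ∈ X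

def Preferred (X : Set α) : Prop :=
  fn.Admissible X ∧ ∀ Y, fn.Admissible Y → X ⊆ Y → X = Y

/-- `X` is the grounded extension: the least complete extension. -/
def IsGrounded (X : Set α) : Prop := fn.Complete X ∧ ∀ Y, fn.Complete Y → X ⊆ Y

/-- Stability via completeness and the deactivated set. -/
def Stable (X : Set α) : Prop := fn.Complete X ∧ fn.deactivated X = Xᶜ

/-- Stability via strong coherence and the discarded set. -/
def StableAtt (X : Set α) : Prop :=
  fn.StronglyCoherent X ∧ fn.discardedAtt X = Xᶜ

/-- Strong consistency of an AFN: no argument is both supported and attacked by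
the same argument. -/
def StronglyConsistent : Prop :=
  ∀ a : α, {b | ∃ B, b ∈ B ∧ fn.N B a} ∩ {b | fn.R b a} = ∅

/-- The ADF corresponding to a strongly consistent AFN. -/
noncomputable def toADF : ADF α where
  L x y := fn.R x y ∨ ∃ B, x ∈ B ∧ fn.N B y
  C a P := decide (¬ ((∃ p ∈ P, fn.R p a) ∨ ∃ Z, fn.N Z a ∧ Z ∩ P = ∅))

end AFN

end Dialectical

/-!
The acceptance condition of `s` in the associated ADF holds for a set `B` exactly when every
attacker of `s` in `B` has a defense set inside `B`. Hence conflict-freeness and stability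
transfer verbatim, and, since strong consistency keeps attackers of `s` out of the defense sets
of attacks on `s`, an interpretation is decisively in for `s` iff each attacker of `s` is false
or has a defense set among the true arguments. For a conflict-free `X` the range `v_X^p`
therefore encodes defense by `X` as soon as `X^{p+}` is the EAFC discarded set `X⁺`, and the
acyclic range does the same for the grounded extension once `X^{a+} = X⁺` there.

A reinstatement set blocks every evaluation of a discarded argument that avoids `X`: walking
along the evaluation, the attacker of each target is false in its interpretation, or the
interpretation makes a whole defense set true, which then contains an earlier target. Conversely,
pruning the defeats by `X` that are not answered by the surviving ones terminates in the largest
reinstatement set; every other defeat was pruned through a defense set whose members were freed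
in an earlier round. This ranks the arguments outside `X⁺` and produces evaluations that avoid
`X`, cyclic only inside `X`; for the grounded extension, ranking its own arguments by the stage
at which the characteristic function accepts them makes them acyclic.
-/

namespace Dialectical

open Set

variable {α : Type u}

theorem tset_mkInterp (T F : Set α) : tset (mkInterp T F) = T := by
  ext a; by_cases hT : a ∈ T <;> simp [tset, mkInterp, hT]

theorem fset_mkInterp (T F : Set α) : fset (mkInterp T F) = F \ T := by
  ext a; by_cases hT : a ∈ T <;> by_cases hF : a ∈ F <;> simp [fset, mkInterp, hT, hF]

theorem disjoint_tset_fset (v : Interp α) : Disjoint (tset v) (fset v) :=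
  disjoint_left.2 fun a (ht : v a = some true) (hf : v a = some false) => by simp [ht] at hf

theorem pdT_of_eq_some {pd : α → Option (Interp α)} {a : α} {v : Interp α}
    (h : pd a = some v) : pdT pd a = tset v := by
  simp [pdT, h]

theorem pdF_of_eq_some {pd : α → Option (Interp α)} {a : α} {v : Interp α}
    (h : pd a = some v) : pdF pd a = fset v := by
  simp [pdF, h]

theorem IsPAEvalWith.congr {pd pd' : α → Option (Interp α)} {X Y : Set α} {x : α}
    {Fs : Set α} {G : List α} {B : Set α} (h : IsPAEvalWith pd X x Fs G B) (hXY : X ⊆ Y)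
    (hpd : ∀ a, a ∈ Fs ∨ a ∈ G → pd' a = pd a) : IsPAEvalWith pd' Y x Fs G B := by
  obtain ⟨hGFs, hnd, hx, hFs, hG, hFsn, hGn, hnil, hlast, hord, hFsT, hFsco, hB⟩ := h
  have hT : ∀ a, a ∈ Fs ∨ a ∈ G → pdT pd' a = pdT pd a := fun a ha => by simp [pdT, hpd a ha]
  have hF : ∀ a, a ∈ Fs ∨ a ∈ G → pdF pd' a = pdF pd a := fun a ha => by simp [pdF, hpd a ha]
  refine ⟨hGFs, hnd, hXY hx, hFs.trans hXY, fun a ha => hXY (hG a ha),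
    fun a ha => hpd a (.inl ha) ▸ hFsn a ha, fun a ha => hpd a (.inr ha) ▸ hGn a ha, hnil, hlast,
    fun i hi => hT _ (.inr (List.get_mem _ _)) ▸ hord i hi,
    fun a ha => hT a (.inl ha) ▸ hFsT a ha, fun a ha => ?_, ?_⟩
  · obtain ⟨b, hb, hab⟩ := hFsco a ha
    exact ⟨b, hb, hT b (.inl hb) ▸ hab⟩
  · rw [hB]
    congr 1
    · exact iUnion₂_congr fun a ha => (hF a (.inl ha)).symm
    · exact iUnion₂_congr fun a ha => (hF a (.inr ha)).symm

/-! ### Constructing evaluations -/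

/-- The largest candidate inside `S` for the set `F` of a partially acyclic evaluation. -/
def cyclicCore (t : α → Set α) (S : Set α) : Set α :=
  ⋃₀ {F | F ⊆ S ∧ (∀ a ∈ F, t a ⊆ F) ∧ ∀ a ∈ F, ∃ c ∈ F, a ∈ t c}

section cyclicCore

variable {t : α → Set α} {S : Set α}

theorem cyclicCore_subset : cyclicCore t S ⊆ S :=
  sUnion_subset fun _ hF => hF.1

theorem subset_cyclicCore {a : α} (ha : a ∈ cyclicCore t S) : t a ⊆ cyclicCore t S := by
  obtain ⟨F, hF, haF⟩ := ha
  exact fun d hd => ⟨F, hF, hF.2.1 a haF hd⟩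

theorem exists_mem_cyclicCore {a : α} (ha : a ∈ cyclicCore t S) :
    ∃ c ∈ cyclicCore t S, a ∈ t c := by
  obtain ⟨F, hF, haF⟩ := ha
  obtain ⟨c, hc, hac⟩ := hF.2.2 a haF
  exact ⟨c, ⟨F, hF, hc⟩, hac⟩

theorem mem_cyclicCore_of_transGen (hS : ∀ a ∈ S, t a ⊆ S) {c : α} (hc : c ∈ S)
    (hcyc : Relation.TransGen (fun a d => d ∈ t a) c c) : c ∈ cyclicCore t S := by
  refine ⟨{a | Relation.ReflTransGen (fun a d => d ∈ t a) c a}, ⟨?_, ?_, ?_⟩, .refl⟩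
  · intro a ha
    induction ha with
    | refl => exact hc
    | tail _ hd ih => exact hS _ ih hd
  · exact fun a ha d hd => ha.tail hd
  · intro a ha
    have : Relation.TransGen (fun a d => d ∈ t a) c a :=
      (Relation.reflTransGen_iff_eq_or_transGen.1 ha).elim (fun h => h ▸ hcyc) id
    exact Relation.TransGen.tail'_iff.1 this

end cyclicCore

/-- Along a `t`-path from `c ∉ XF`, the rank `ν` drops until the path enters `XF`, which it
never leaves again; so no such path returns to `c`. -/
theorem not_transGen_self {t : α → Set α} {W XF : Set α} {ν : α → ℕ}
    (hW : ∀ a ∈ W, t a ⊆ W) (hXF : ∀ a ∈ XF, t a ⊆ XF)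
    (hν : ∀ a ∈ W, a ∉ XF → ∀ d ∈ t a, d ∈ XF ∨ ν d < ν a) {c : α} (hc : c ∈ W)
    (hcXF : c ∉ XF) : ¬ Relation.TransGen (fun a d => d ∈ t a) c c := by
  suffices h : ∀ d, Relation.TransGen (fun a d => d ∈ t a) c d → d ∈ W ∧ (d ∈ XF ∨ ν d < ν c)
    from fun hcyc => (h c hcyc).2.elim hcXF (lt_irrefl _)
  intro d hd
  induction hd with
  | single hd => exact ⟨hW c hc hd, hν c hc hcXF _ hd⟩
  | @tail b d _ hd ih =>
    refine ⟨hW b ih.1 hd, ?_⟩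
    by_cases hb : b ∈ XF
    · exact .inl (hXF b hb hd)
    · have := ih.2.resolve_left hb
      exact (hν b ih.1 hb d hd).imp_right (·.trans this)

theorem exists_list_of_not_transGen [Finite α] {r : α → α → Prop} {S : Set α}
    (hS : ∀ c ∈ S, ¬ Relation.TransGen r c c) {b : α} (hb : b ∈ S) :
    ∃ l : List α, l.Nodup ∧ (∀ a ∈ l, a ∈ S) ∧ l.getLast? = some b ∧
      ∀ (i : ℕ) (hi : i < l.length), ∀ d ∈ S, r l[i] d →
        ∃ (j : ℕ) (hj : j < l.length), j < i ∧ l[j] = d := by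
  let σ : α → ℕ := fun c => {d ∈ S | Relation.TransGen r c d}.ncard
  have hσ : ∀ c, ∀ d ∈ S, r c d → σ d < σ c := fun c d hd hcd =>
    ncard_lt_ncard ⟨fun e ⟨heS, hde⟩ => ⟨heS, .head hcd hde⟩,
      fun h => hS d hd (h ⟨hd, .single hcd⟩).2⟩ (toFinite _)
  let L := (toFinite S).toFinset.toList.mergeSort fun a c => decide (σ a ≤ σ c)
  have hL : ∀ a, a ∈ L ↔ a ∈ S := by simp [L]
  have hsorted : L.Pairwise fun a c => σ a ≤ σ c := by
    simpa using List.pairwise_mergeSort (le := fun a c => decide (σ a ≤ σ c))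
      (fun a b c => by simp only [decide_eq_true_eq]; omega)
      (fun a b => by simp only [Bool.or_eq_true, decide_eq_true_eq]; omega) _
  have hord : ∀ i j (hi : i < L.length) (hj : j < L.length), r L[i] L[j] → j < i := by
    intro i j hi hj hr
    have hlt := hσ L[i] L[j] ((hL _).1 (List.getElem_mem _)) hr
    by_contra! hij
    rcases hij.lt_or_eq with hij | rfl
    · have := List.pairwise_iff_getElem.1 hsorted i j hi hj hij
      omega
    · omega
  have hbL : b ∈ L := (hL b).2 hb
  have hk : L.idxOf b < L.length := List.idxOf_lt_length_of_mem hbL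
  refine ⟨L.take (L.idxOf b + 1),
    ((List.mergeSort_perm _ _).nodup_iff.2 (Finset.nodup_toList _)).sublist
      (List.take_sublist _ _),
    fun a ha => (hL a).1 (List.mem_of_mem_take ha), ?_, ?_⟩
  · simp [List.getLast?_take, List.getElem?_eq_getElem hk, List.getElem_idxOf]
  · intro i hi d hd hr
    obtain ⟨j, hj, rfl⟩ := List.mem_iff_getElem.1 ((hL d).2 hd)
    have hi' : i < L.length := by simp at hi; omega
    have := hord i j hi' hj (by simpa using hr)
    exact ⟨j, by simp at hi ⊢; omega, this, by simp⟩

namespace ADF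

variable (D : ADF α)

theorem decisivelyIn_iff (v : Interp α) (e : α) :
    D.DecisivelyIn v e ↔
      ∀ S ⊆ D.par e, tset v ∩ D.par e ⊆ S → Disjoint S (fset v) → D.C e S = true := by
  constructor
  · intro hv S hSpar htS hSf
    let w : Interp α := fun a =>
      if v a ≠ none then v a else if a ∈ D.par e then some (decide (a ∈ S)) else none
    have hw : Completion v w (idom v ∪ D.par e) := by
      refine ⟨?_, fun a ha => if_pos ha⟩
      ext a
      by_cases h1 : v a = none <;> by_cases h2 : a ∈ D.par e <;> simp [idom, w, h1, h2]
    have hS : tset w ∩ D.par e = S := by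
      ext a
      refine ⟨fun ⟨hwa, hpar⟩ => ?_, fun haS => ⟨?_, hSpar haS⟩⟩
      · rcases hva : v a with _ | _ | _
        · simpa [tset, w, hva, hpar] using hwa
        · simp [tset, w, hva] at hwa
        · exact htS ⟨hva, hpar⟩
      · rcases hva : v a with _ | _ | _
        · simp [tset, w, hva, hSpar haS, haS]
        · exact absurd hva (disjoint_left.1 hSf haS)
        · simp [tset, w, hva]
    simpa [ADF.evalCond, hS] using hv w hw
  · rintro h w ⟨-, hwv⟩
    have hdom : ∀ {a b}, v a = some b → w a = some b := fun hva =>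
      (hwv _ (by simp [idom, hva])).trans hva
    refine h _ inter_subset_right (fun a ⟨ha, hpar⟩ => ⟨hdom ha, hpar⟩) ?_
    refine disjoint_left.2 fun a ⟨ha, _⟩ hf => ?_
    have : w a = some false := hdom hf
    simp_all [tset]

theorem exists_minDecIn_le [Finite α] {e : α} {w : Interp α} (hw : D.DecisivelyIn w e) :
    ∃ v, D.MinDecIn v e ∧ tset v ⊆ tset w ∧ fset v ⊆ fset w := by
  let size : Interp α → ℕ := fun v => (tset v).ncard + (fset v).ncard
  obtain ⟨v, ⟨hv, hvt, hvf⟩, hmin⟩ := (measure size).wf.has_min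
    {v | D.DecisivelyIn v e ∧ tset v ⊆ tset w ∧ fset v ⊆ fset w} ⟨w, hw, le_rfl, le_rfl⟩
  refine ⟨v, ⟨hv, fun u hu hut huf => ?_⟩, hvt, hvf⟩
  by_contra hne
  refine hmin u ⟨hu, hut.trans hvt, huf.trans hvf⟩ ?_
  have ht := ncard_le_ncard hut (toFinite _)
  have hf := ncard_le_ncard huf (toFinite _)
  by_cases htu : tset u = tset v
  · have := ncard_lt_ncard (ssubset_of_subset_of_ne huf fun h => hne ⟨htu, h⟩) (toFinite _)
    exact Nat.add_lt_add_of_le_of_lt ht this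
  · have := ncard_lt_ncard (ssubset_of_subset_of_ne hut htu) (toFinite _)
    exact Nat.add_lt_add_of_lt_of_le this hf

theorem maxSound_of_total {X : Set α} {v : α → Interp α}
    (hv : ∀ a ∈ X, D.MinDecIn (v a) a ∧ tset (v a) ⊆ X) :
    D.MaxSound X (fun a => some (v a)) := by
  refine ⟨fun a ha => ⟨fun w hw => Option.some_injective _ hw ▸ hv a ha, by simp⟩, ?_⟩
  rintro ⟨X'', -, -, -, hlt, hX'', -⟩
  exact hlt.2 fun a ha => ⟨hX'' ha, by simp⟩

theorem paEval_univ (hmin : ∀ a, ∃ v, D.MinDecIn v a) {X : Set α} {x : α} {Fs : Set α}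
    {G : List α} {B : Set α} (h : D.PAEval X x Fs G B) : D.PAEval univ x Fs G B := by
  obtain ⟨pd, ⟨hpd, -⟩, hev⟩ := h
  choose dflt hdflt using hmin
  let v : α → Interp α := fun a => if h : a ∈ X ∧ pd a ≠ none then (pd a).get
    (Option.isSome_iff_ne_none.2 h.2) else dflt a
  have hv : ∀ a, a ∈ X → pd a ≠ none → pd a = some (v a) := fun a ha hn => by
    simp [v, ha, hn]
  refine ⟨fun a => some (v a), D.maxSound_of_total fun a _ => ⟨?_, subset_univ _⟩,
    hev.congr (subset_univ _) fun a ha => ?_⟩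
  · by_cases h : a ∈ X ∧ pd a ≠ none
    · exact ((hpd a h.1).1 _ (hv a h.1 h.2)).1
    · simpa [v, h] using hdflt a
  · obtain ⟨-, -, -, hFs, hG, hFsn, hGn, -⟩ := hev
    rcases ha with ha | ha
    · exact (hv a (hFs ha) (hFsn a ha)).symm
    · exact (hv a (hG a ha) (hGn a ha)).symm

theorem disjoint_aDiscarded_of_pdAcyclicCF (hmin : ∀ a, ∃ v, D.MinDecIn v a) {X : Set α}
    (hX : D.PDAcyclicCF X) : Disjoint X (D.aDiscarded X) := by
  refine disjoint_left.2 fun a ha had => ?_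
  obtain ⟨G, B, hev, hB⟩ := hX a ha
  simpa [hB] using had G B (D.paEval_univ hmin hev)

theorem exists_paEval [Finite α] (v : α → Interp α) {W XF A : Set α} (ν : α → ℕ)
    (hv : ∀ a ∈ W, D.MinDecIn (v a) a) (hW : ∀ a ∈ W, tset (v a) ⊆ W) (hXFW : XF ⊆ W)
    (hXF : ∀ a ∈ XF, tset (v a) ⊆ XF)
    (hν : ∀ a ∈ W, a ∉ XF → ∀ d ∈ tset (v a), d ∈ XF ∨ ν d < ν a)
    (hA : ∀ a ∈ W, Disjoint (fset (v a)) A) {b : α} (hb : b ∈ W) :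
    ∃ Fs G B, D.PAEval W b Fs G B ∧ Fs ⊆ XF ∧ B ∩ A = ∅ := by
  let Fs := cyclicCore (fun a => tset (v a)) XF
  have hFsW : Fs ⊆ W := cyclicCore_subset.trans hXFW
  have hacyc : ∀ c ∈ W \ Fs, ¬ Relation.TransGen (fun a d => d ∈ tset (v a)) c c := by
    rintro c ⟨hcW, hcFs⟩ hcyc
    by_cases hcXF : c ∈ XF
    · exact hcFs (mem_cyclicCore_of_transGen hXF hcXF hcyc)
    · exact not_transGen_self hW hXF hν hcW hcXF hcyc
  obtain ⟨G, hG, hnd, hnil, hlast, hord⟩ : ∃ G : List α, (∀ a ∈ G, a ∈ W \ Fs) ∧ G.Nodup ∧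
      (G = [] → b ∈ Fs) ∧ (G ≠ [] → G.getLast? = some b) ∧ ∀ (i : ℕ) (hi : i < G.length),
        tset (v G[i]) ⊆ Fs ∪ {d | ∃ (j : ℕ) (hj : j < G.length), j < i ∧ G[j] = d} := by
    by_cases hbFs : b ∈ Fs
    · exact ⟨[], by simp, List.nodup_nil, fun _ => hbFs, by simp, by simp⟩
    obtain ⟨l, hnd, hlS, hlast, hord⟩ := exists_list_of_not_transGen hacyc ⟨hb, hbFs⟩
    refine ⟨l, hlS, hnd, fun h => by simp [h] at hlast, fun _ => hlast, fun i hi d hd => ?_⟩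
    by_cases hdFs : d ∈ Fs
    · exact .inl hdFs
    · exact .inr (hord i hi d ⟨hW _ (hlS _ (List.getElem_mem _)).1 hd, hdFs⟩ hd)
  have hT : ∀ a, pdT (fun a => some (v a)) a = tset (v a) := fun a => pdT_of_eq_some rfl
  have hF : ∀ a, pdF (fun a => some (v a)) a = fset (v a) := fun a => pdF_of_eq_some rfl
  refine ⟨Fs, G, _, ⟨_, D.maxSound_of_total fun a ha => ⟨hv a ha, hW a ha⟩,
    fun a ha => (hG a ha).2, hnd, hb, hFsW, fun a ha => (hG a ha).1, by simp, by simp, hnil,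
    hlast, fun i hi => by simpa [hT] using hord i hi,
    fun a ha => by simpa [hT] using subset_cyclicCore ha,
    fun a ha => by simpa [hT] using exists_mem_cyclicCore ha, rfl⟩, cyclicCore_subset, ?_⟩
  simp only [hF, ← disjoint_iff_inter_eq_empty, disjoint_union_left, disjoint_iUnion₂_left]
  exact ⟨fun a ha => hA a (hFsW ha), fun a ha => hA a (hG a ha).1⟩

end ADF

namespace EAFC

variable {E : EAFC α}

theorem toADF_C_eq_true_iff {e : α} {B : Set α} :
    E.toADF.C e B = true ↔ ∀ x ∈ B, E.R x e → ∃ C ⊆ B, E.D C x e := by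
  simp [toADF]

theorem mem_toADF_par_of_R {x a : α} (h : E.R x a) : x ∈ E.toADF.par a := Or.inl h

theorem mem_toADF_par_of_D {y x a : α} {C : Set α} (hD : E.D C x a) (hy : y ∈ C) :
    y ∈ E.toADF.par a := Or.inr ⟨x, C, hy, hD⟩

theorem StronglyConsistent.not_R (hsc : E.StronglyConsistent) {C : Set α} {x a y : α}
    (hD : E.D C x a) (hy : y ∈ C) : ¬E.R y a :=
  fun hR => hsc ⟨y, a, x, C, hR, hy, hD⟩

theorem exists_subset_of_not_defeats {X : Set α} {x a : α} (hR : E.R x a)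
    (h : ¬E.Defeats X x a) : ∃ C ⊆ X, E.D C x a := by
  simpa [Defeats, hR] using h

theorem toADF_C_inter_par_eq_true_iff {X : Set α} {s : α} :
    E.toADF.C s (X ∩ E.toADF.par s) = true ↔ ∀ x ∈ X, ¬E.Defeats X x s := by
  rw [toADF_C_eq_true_iff]
  refine forall_congr' fun x => ⟨fun h hx ⟨hR, hnd⟩ => ?_, fun h hx hR => ?_⟩
  · obtain ⟨C, hC, hD⟩ := h ⟨hx, mem_toADF_par_of_R hR⟩ hR
    exact hnd ⟨C, hC.trans inter_subset_left, hD⟩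
  · obtain ⟨C, hC, hD⟩ := exists_subset_of_not_defeats hR (h hx.1)
    exact ⟨C, fun y hy => ⟨hC hy, mem_toADF_par_of_D hD hy⟩, hD⟩

theorem conflictFree_iff (X : Set α) : E.ConflictFree X ↔ E.toADF.ConflictFree X := by
  simp only [ConflictFree, ADF.ConflictFree, toADF_C_inter_par_eq_true_iff]
  grind

theorem stable_iff (X : Set α) : E.Stable X ↔ E.toADF.IsModel X := by
  simp only [Stable, ADF.IsModel, conflictFree_iff, ← Bool.not_eq_true,
    toADF_C_inter_par_eq_true_iff]
  grind

theorem toADF_decisivelyIn_of_forall (v : Interp α) (e : α)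
    (h : ∀ x, E.R x e → x ∈ fset v ∨ ∃ C ⊆ tset v, E.D C x e) : E.toADF.DecisivelyIn v e := by
  refine (E.toADF.decisivelyIn_iff v e).2 fun S _ htS hSf => toADF_C_eq_true_iff.2 ?_
  intro x hxS hx
  obtain ⟨C, hC, hD⟩ := (h x hx).resolve_left (disjoint_left.1 hSf hxS)
  exact ⟨C, fun y hy => htS ⟨hC hy, mem_toADF_par_of_D hD hy⟩, hD⟩

theorem toADF_decisivelyIn_iff (hsc : E.StronglyConsistent) (v : Interp α) (e : α) :
    E.toADF.DecisivelyIn v e ↔ ∀ x, E.R x e → x ∈ fset v ∨ ∃ C ⊆ tset v, E.D C x e := by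
  refine ⟨fun h x hx => or_iff_not_imp_left.2 fun hxf => ?_, toADF_decisivelyIn_of_forall v e⟩
  have hS := (E.toADF.decisivelyIn_iff v e).1 h (insert x (tset v ∩ E.toADF.par e))
    (insert_subset (mem_toADF_par_of_R hx) inter_subset_right) (subset_insert _ _)
    (disjoint_insert_left.2 ⟨hxf, (disjoint_tset_fset v).mono_left inter_subset_left⟩)
  obtain ⟨C, hC, hD⟩ := toADF_C_eq_true_iff.1 hS x (mem_insert _ _) hx
  refine ⟨C, fun y hy => ?_, hD⟩
  rcases hC hy with rfl | hy'
  · exact absurd hx (hsc.not_R hD hy)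
  · exact hy'.1

theorem exists_minDecIn [Finite α] (a : α) : ∃ v, E.toADF.MinDecIn v a := by
  have : E.toADF.DecisivelyIn (mkInterp ∅ univ) a :=
    toADF_decisivelyIn_of_forall _ a fun x _ => .inl (by simp [fset_mkInterp])
  obtain ⟨v, hv, -⟩ := E.toADF.exists_minDecIn_le this
  exact ⟨v, hv⟩

theorem exists_minDecIn_of_forall [Finite α] (hsc : E.StronglyConsistent) {a : α}
    {T F : Set α} (h : ∀ x, E.R x a → x ∈ F ∨ ∃ C ⊆ T, E.D C x a) :
    ∃ v, E.toADF.MinDecIn v a ∧ tset v ⊆ T ∧ fset v ⊆ F := by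
  let T' := {y ∈ T | ¬E.R y a}
  have hdec : E.toADF.DecisivelyIn (mkInterp T' F) a := by
    refine toADF_decisivelyIn_of_forall _ a fun x hx => ?_
    rw [tset_mkInterp, fset_mkInterp]
    exact (h x hx).imp (fun hxF => ⟨hxF, fun hxT => hxT.2 hx⟩)
      fun ⟨C, hC, hD⟩ => ⟨C, fun y hy => ⟨hC hy, hsc.not_R hD hy⟩, hD⟩
  obtain ⟨v, hv, ht, hf⟩ := E.toADF.exists_minDecIn_le hdec
  rw [tset_mkInterp] at ht
  rw [fset_mkInterp] at hf
  exact ⟨v, hv, ht.trans (sep_subset _ _), hf.trans sdiff_subset⟩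

/-! ### Discarded sets -/

theorem Reinstatement.snd_mem_discarded {X : Set α} {RS : Set (α × α)} {a b : α}
    (h : E.Reinstatement X RS a b) {q : α × α} (hq : q ∈ RS) : q.2 ∈ E.discarded X :=
  ⟨q.1, (h.2.1 q hq).1, (h.2.1 q hq).2, RS, h.1, h.2.1, hq, h.2.2.2⟩

theorem ConflictFree.disjoint_discarded {X : Set α} (hcf : E.ConflictFree X) :
    Disjoint X (E.discarded X) :=
  disjoint_left.2 fun a ha ⟨c, hc, hd, _⟩ => hcf ⟨c, hc, a, ha, hd⟩

theorem inter_nonempty_of_mem_discarded (hsc : E.StronglyConsistent)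
    {pd : α → Option (Interp α)} (hpd : ∀ a v, pd a = some v → E.toADF.MinDecIn v a)
    {Y X Fs B : Set α} {b : α} {G : List α} (hev : IsPAEvalWith pd Y b Fs G B)
    (hFs : Disjoint Fs (E.discarded X)) (hb : b ∈ E.discarded X) : (B ∩ X).Nonempty := by
  by_contra hBX
  obtain ⟨-, -, -, -, -, -, hGn, hnil, hlast, hord, -, -, rfl⟩ := hev
  obtain ⟨a, -, -, RS, hRS⟩ := hb
  simp only [List.get_eq_getElem] at hord
  -- The attacker of `G[i]` is false in the interpretation of `G[i]`, so lies in `B ∩ X`, or one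
  -- of its defense sets is true there; that set contains an earlier target of the reinstatement.
  have hG : ∀ i (hi : i < G.length), ∀ q ∈ RS, q.2 ≠ G[i] := by
    intro i
    induction i using Nat.strong_induction_on with
    | _ i ih =>
    intro hi q hq hqi
    obtain ⟨w, hw⟩ := Option.ne_none_iff_exists'.1 (hGn _ (List.getElem_mem hi))
    have hR : E.R q.1 G[i] := hqi ▸ (hRS.2.1 q hq).2.1
    rcases (toADF_decisivelyIn_iff hsc w _).1 (hpd _ w hw).1 q.1 hR with hf | ⟨C, hC, hD⟩
    · refine hBX ⟨q.1, .inr (mem_biUnion (List.getElem_mem hi) ?_), (hRS.2.1 q hq).1⟩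
      rwa [pdF_of_eq_some hw]
    · obtain ⟨q', hq', hq'C⟩ := hRS.2.2.2 q hq C (hqi ▸ hD)
      rcases hord i hi (pdT_of_eq_some hw ▸ hC hq'C) with hFs' | ⟨j, hj, hji, hjq⟩
      · exact disjoint_left.1 hFs hFs' (hRS.snd_mem_discarded hq')
      · exact ih j hji hj q' hq' hjq.symm
  by_cases hGnil : G = []
  · exact disjoint_left.1 hFs (hnil hGnil) (hRS.snd_mem_discarded hRS.2.2.1)
  · have hlen : G.length - 1 < G.length := Nat.sub_one_lt (by simpa using hGnil)
    have := hlast hGnil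
    rw [List.getLast?_eq_getElem?, List.getElem?_eq_getElem hlen, Option.some_inj] at this
    exact hG _ hlen _ hRS.2.2.1 this.symm

theorem discarded_subset_pDiscarded (hsc : E.StronglyConsistent) {X : Set α}
    (hcf : E.ConflictFree X) : E.discarded X ⊆ E.toADF.pDiscarded X := by
  rintro b hb ⟨Fs, G, B, ⟨pd, hms, hev⟩, hFsX, hBX⟩
  have := inter_nonempty_of_mem_discarded hsc (fun a v hv => ((hms.1 a trivial).1 v hv).1) hev
    (hcf.disjoint_discarded.mono_left hFsX) hb
  simp [hBX] at this

theorem discarded_subset_aDiscarded (hsc : E.StronglyConsistent) {X Y : Set α} (hXY : X ⊆ Y) :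
    E.discarded X ⊆ E.toADF.aDiscarded Y := by
  rintro b hb G B ⟨pd, hms, hev⟩
  exact (inter_nonempty_of_mem_discarded hsc (fun a v hv => ((hms.1 a trivial).1 v hv).1) hev
    (empty_disjoint _) hb).mono (inter_subset_inter_right _ hXY)

variable (E) in
/-- Pruning rounds whose limit is the largest reinstatement set on `X`. -/
def prunedDefeats (X : Set α) : ℕ → Set (α × α)
  | 0 => {p | p.1 ∈ X ∧ E.Defeats X p.1 p.2}
  | k + 1 => {p ∈ prunedDefeats X k | ∀ C, E.D C p.1 p.2 → ∃ q ∈ prunedDefeats X k, q.2 ∈ C}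

variable (E) in
/-- The junk value `0` for a discarded `b`, a target in every round, is never used. -/
noncomputable def survivalRank (X : Set α) (b : α) : ℕ :=
  sInf {k | ∀ q ∈ E.prunedDefeats X k, q.2 ≠ b}

theorem prunedDefeats_antitone {X : Set α} : Antitone (E.prunedDefeats X) :=
  antitone_nat_of_succ_le fun _ => sep_subset _ _

theorem Reinstatement.subset_prunedDefeats {X : Set α} {RS : Set (α × α)} {a b : α}
    (h : E.Reinstatement X RS a b) : ∀ k, RS ⊆ E.prunedDefeats X k
  | 0 => fun p hp => h.2.1 p hp
  | k + 1 => fun p hp => ⟨h.subset_prunedDefeats k hp, fun C hC =>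
      (h.2.2.2 p hp C hC).imp fun _ ⟨hq, hqC⟩ => ⟨h.subset_prunedDefeats k hq, hqC⟩⟩

theorem mem_discarded_iff [Finite α] {X : Set α} {b : α} :
    b ∈ E.discarded X ↔ ∀ k, ∃ q ∈ E.prunedDefeats X k, q.2 = b := by
  refine ⟨fun ⟨a, _, _, RS, hRS⟩ k => ⟨(a, b), hRS.subset_prunedDefeats k hRS.2.2.1, rfl⟩,
    fun h => ?_⟩
  obtain ⟨K, hK⟩ := WellFoundedLT.antitone_chain_condition (E.prunedDefeats_antitone (X := X))
  obtain ⟨q, hq, rfl⟩ := h K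
  have hK0 : E.prunedDefeats X K ⊆ E.prunedDefeats X 0 := E.prunedDefeats_antitone K.zero_le
  refine ⟨q.1, (hK0 hq).1, (hK0 hq).2, _, toFinite _, fun p hp => hK0 hp, hq, fun p hp => ?_⟩
  rw [hK (K + 1) K.le_succ] at hp
  exact hp.2

theorem survivalRank_le {X : Set α} {b : α} {k : ℕ}
    (h : ∀ q ∈ E.prunedDefeats X k, q.2 ≠ b) : E.survivalRank X b ≤ k :=
  Nat.sInf_le h

theorem survivalRank_eq_zero {X : Set α} (hcf : E.ConflictFree X) {a : α} (ha : a ∈ X) :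
    E.survivalRank X a = 0 :=
  Nat.le_zero.1 (survivalRank_le fun q hq hqa => hcf ⟨q.1, hq.1, a, ha, hqa ▸ hq.2⟩)

theorem exists_defense_of_not_mem_discarded [Finite α] {X : Set α} {b x : α}
    (hb : b ∉ E.discarded X) (hx : x ∈ X) (hd : E.Defeats X x b) :
    ∃ C, E.D C x b ∧ ∀ y ∈ C, y ∉ E.discarded X ∧ E.survivalRank X y < E.survivalRank X b := by
  obtain ⟨k, hk⟩ := not_forall.1 (mt mem_discarded_iff.2 hb)
  have hne : {k | ∀ q ∈ E.prunedDefeats X k, q.2 ≠ b}.Nonempty :=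
    ⟨k, fun q hq hqb => hk ⟨q, hq, hqb⟩⟩
  suffices h : ∀ k, (x, b) ∉ E.prunedDefeats X k →
      ∃ C, E.D C x b ∧ ∀ y ∈ C, y ∉ E.discarded X ∧ E.survivalRank X y < k from
    h _ fun hxb => Nat.sInf_mem hne _ hxb rfl
  intro k
  induction k with
  | zero => exact fun h => absurd ⟨hx, hd⟩ h
  | succ k ih =>
    intro hk
    by_cases hk' : (x, b) ∈ E.prunedDefeats X k
    · obtain ⟨C, hD, hC⟩ : ∃ C, E.D C x b ∧ ∀ q ∈ E.prunedDefeats X k, q.2 ∉ C := by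
        simpa [prunedDefeats, hk'] using hk
      refine ⟨C, hD, fun y hy => ⟨fun hyd => ?_,
        Nat.lt_succ_of_le (survivalRank_le fun q hq hqy => hC q hq (hqy ▸ hy))⟩⟩
      obtain ⟨q, hq, rfl⟩ := mem_discarded_iff.1 hyd k
      exact hC q hq hy
    · obtain ⟨C, hD, hC⟩ := ih hk'
      exact ⟨C, hD, fun y hy => (hC y hy).imp_right (·.trans k.lt_succ_self)⟩

theorem exists_minDecIn_of_not_mem_discarded [Finite α] (hsc : E.StronglyConsistent)
    {X : Set α} {a : α} (ha : a ∉ E.discarded X) :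
    ∃ v, E.toADF.MinDecIn v a ∧ fset v ⊆ Xᶜ ∧ ∀ y ∈ tset v,
      y ∈ X ∨ (y ∉ E.discarded X ∧ E.survivalRank X y < E.survivalRank X a) := by
  obtain ⟨v, hv, ht, hf⟩ := exists_minDecIn_of_forall hsc (a := a) (F := Xᶜ)
    (T := {y | y ∈ X ∨ (y ∉ E.discarded X ∧ E.survivalRank X y < E.survivalRank X a)})
    fun x hx => by
      by_cases hxX : x ∈ X
      · by_cases hd : E.Defeats X x a
        · obtain ⟨C, hD, hC⟩ := exists_defense_of_not_mem_discarded ha hxX hd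
          exact .inr ⟨C, fun y hy => .inr (hC y hy), hD⟩
        · obtain ⟨C, hC, hD⟩ := exists_subset_of_not_defeats hx hd
          exact .inr ⟨C, fun y hy => .inl (hC hy), hD⟩
      · exact .inl hxX
  exact ⟨v, hv, hf, ht⟩

theorem pDiscarded_eq_discarded [Finite α] (hsc : E.StronglyConsistent) {X : Set α}
    (hcf : E.ConflictFree X) : E.toADF.pDiscarded X = E.discarded X := by
  refine Subset.antisymm (fun b hb => ?_) (discarded_subset_pDiscarded hsc hcf)
  by_contra hbd
  choose! v hv using fun a (ha : a ∉ E.discarded X) =>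
    exists_minDecIn_of_not_mem_discarded hsc ha
  have hXW : X ⊆ (E.discarded X)ᶜ := fun a ha => disjoint_left.1 hcf.disjoint_discarded ha
  obtain ⟨Fs, G, B, hev, hFs, hB⟩ := E.toADF.exists_paEval v (E.survivalRank X)
    (fun a ha => (hv a ha).1)
    (fun a ha y hy => ((hv a ha).2.2 y hy).elim (fun h => hXW h) And.left) hXW
    (fun a ha y hy => ((hv a (hXW ha)).2.2 y hy).resolve_right
      (by simp [survivalRank_eq_zero hcf ha]))
    (fun a ha _ y hy => ((hv a ha).2.2 y hy).imp_right And.right)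
    (fun a ha => subset_compl_iff_disjoint_right.1 (hv a ha).2.1) hbd
  exact hb ⟨Fs, G, B, E.toADF.paEval_univ exists_minDecIn hev, hFs, hB⟩

theorem decisivelyIn_mkInterp_discarded_iff (hsc : E.StronglyConsistent) {X : Set α}
    (hcf : E.ConflictFree X) (e : α) :
    E.toADF.DecisivelyIn (mkInterp X (E.discarded X \ X)) e ↔ E.Defends X e := by
  rw [toADF_decisivelyIn_iff hsc, tset_mkInterp, fset_mkInterp, sdiff_sdiff, union_self]
  have hdX : ∀ x ∈ E.discarded X, x ∉ X := fun x hx hxX =>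
    disjoint_left.1 hcf.disjoint_discarded hxX hx
  simp only [Defends, Defeats, mem_sdiff]
  grind

theorem decisivelyIn_pRange_iff [Finite α] (hsc : E.StronglyConsistent) {X : Set α}
    (hcf : E.ConflictFree X) (e : α) :
    E.toADF.DecisivelyIn (E.toADF.pRange X) e ↔ E.Defends X e := by
  rw [ADF.pRange, pDiscarded_eq_discarded hsc hcf, decisivelyIn_mkInterp_discarded_iff hsc hcf]

theorem admissible_iff [Finite α] (hsc : E.StronglyConsistent) (X : Set α) :
    E.Admissible X ↔ E.toADF.CA2Admissible X := by
  rw [Admissible, ADF.CA2Admissible, ← conflictFree_iff]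
  exact and_congr_right fun hcf => forall₂_congr fun e _ => (decisivelyIn_pRange_iff hsc hcf e).symm

theorem complete_iff [Finite α] (hsc : E.StronglyConsistent) (X : Set α) :
    E.Complete X ↔ E.toADF.CA2Complete X := by
  rw [Complete, ADF.CA2Complete, admissible_iff hsc]
  exact and_congr_right fun hadm => forall_congr' fun e => imp_congr_left
    (decisivelyIn_pRange_iff hsc ((conflictFree_iff X).2 hadm.1) e).symm

theorem preferred_iff [Finite α] (hsc : E.StronglyConsistent) (X : Set α) :
    E.Preferred X ↔ E.toADF.CA2Preferred X := by
  simp only [Preferred, ADF.CA2Preferred, admissible_iff hsc]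

/-! ### The grounded extension -/

theorem Defeats.anti {X Y : Set α} (hXY : X ⊆ Y) {a b : α} (h : E.Defeats Y a b) :
    E.Defeats X a b :=
  ⟨h.1, fun ⟨C, hCX, hCD⟩ => h.2 ⟨C, hCX.trans hXY, hCD⟩⟩

theorem discarded_mono {X Y : Set α} (hXY : X ⊆ Y) (hY : Disjoint Y (E.discarded X)) :
    E.discarded X ⊆ E.discarded Y := by
  rintro b ⟨a, -, -, RS, hRS⟩
  have hdef : ∀ p ∈ RS, E.Defeats Y p.1 p.2 := fun p hp => ⟨(hRS.2.1 p hp).2.1, fun ⟨C, hCY, hD⟩ =>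
    let ⟨q, hq, hqC⟩ := hRS.2.2.2 p hp C hD
    disjoint_left.1 hY (hCY hqC) (hRS.snd_mem_discarded hq)⟩
  exact ⟨a, hXY (hRS.2.1 _ hRS.2.2.1).1, hdef _ hRS.2.2.1, RS, hRS.1,
    fun p hp => ⟨hXY (hRS.2.1 p hp).1, hdef p hp⟩, hRS.2.2.1, hRS.2.2.2⟩

theorem disjoint_charFun_discarded {Z : Set α} (hcf : E.ConflictFree Z) :
    Disjoint (E.charFun Z) (E.discarded Z) := by
  refine disjoint_left.2 fun a ha ⟨c, hcZ, hca, _⟩ => ?_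
  obtain ⟨c', hc'Z, hc'c, _⟩ := ha c hca
  exact hcf ⟨c', hc'Z, c, hcZ, hc'c⟩

theorem conflictFree_charFun {Z : Set α} (hcf : E.ConflictFree Z) (hZ : Z ⊆ E.charFun Z) :
    E.ConflictFree (E.charFun Z) := fun ⟨a, ha, _, hb, hab⟩ =>
  disjoint_left.1 (disjoint_charFun_discarded hcf) ha (hb a (hab.anti hZ))

theorem Defends.mono {X Y : Set α} {a : α} (h : E.Defends X a) (hXY : X ⊆ Y)
    (hY : Disjoint Y (E.discarded X)) : E.Defends Y a :=
  fun b hb => discarded_mono hXY hY (h b (hb.anti hXY))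

theorem conflictFree_iterate_charFun (i : ℕ) :
    E.ConflictFree (E.charFun^[i] ∅) ∧ E.charFun^[i] ∅ ⊆ E.charFun^[i + 1] ∅ := by
  induction i with
  | zero => exact ⟨fun ⟨_, ha, _⟩ => ha, empty_subset _⟩
  | succ i ih =>
    simp only [Function.iterate_succ_apply'] at ih ⊢
    exact ⟨conflictFree_charFun ih.1 ih.2,
      fun a ha => ha.mono ih.2 (disjoint_charFun_discarded ih.1)⟩

theorem monotone_iterate_charFun : Monotone fun i => E.charFun^[i] ∅ :=
  monotone_nat_of_le_succ fun i => (conflictFree_iterate_charFun i).2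

theorem monotone_discarded_iterate_charFun :
    Monotone fun i => E.discarded (E.charFun^[i] ∅) := by
  refine monotone_nat_of_le_succ fun i => discarded_mono (conflictFree_iterate_charFun i).2 ?_
  rw [Function.iterate_succ_apply']
  exact disjoint_charFun_discarded (conflictFree_iterate_charFun i).1

theorem exists_grounded_eq_iterate [Finite α] :
    ∃ N, E.grounded = E.charFun^[N] ∅ ∧ E.charFun E.grounded = E.grounded := by
  obtain ⟨N, hN⟩ :=
    WellFoundedGT.monotone_chain_condition ⟨_, monotone_iterate_charFun (E := E)⟩
  simp only [OrderHom.coe_mk] at hN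
  have hgr : E.grounded = E.charFun^[N] ∅ :=
    (iUnion_subset fun i => (le_total i N).elim (fun h => monotone_iterate_charFun h)
      fun h => (hN i h).ge).antisymm (subset_iUnion (fun i => E.charFun^[i] ∅) N)
  refine ⟨N, hgr, ?_⟩
  rw [hgr, ← Function.iterate_succ_apply' E.charFun]
  exact (hN (N + 1) N.le_succ).symm

theorem conflictFree_grounded [Finite α] : E.ConflictFree E.grounded := by
  obtain ⟨N, hN, -⟩ := exists_grounded_eq_iterate (E := E)
  exact hN ▸ (conflictFree_iterate_charFun N).1

variable (E) in
noncomputable def stage (a : α) : ℕ := sInf {k | a ∈ E.charFun^[k + 1] ∅}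

theorem stage_lt {a : α} {k : ℕ} (ha : a ∈ E.charFun^[k] ∅) : E.stage a < k := by
  cases k with
  | zero => exact absurd ha (notMem_empty a)
  | succ k => exact Nat.lt_succ_of_le (Nat.sInf_le ha)

theorem defends_iterate_stage {a : α} (ha : a ∈ E.grounded) :
    E.Defends (E.charFun^[E.stage a] ∅) a := by
  obtain ⟨_ | k, hk⟩ := mem_iUnion.1 ha
  · exact absurd hk (notMem_empty a)
  · have : E.stage a ∈ {k | a ∈ E.charFun^[k + 1] ∅} := Nat.sInf_mem ⟨k, hk⟩
    rwa [mem_ofPred_eq, Function.iterate_succ_apply'] at this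

theorem exists_minDecIn_of_mem_grounded [Finite α] (hsc : E.StronglyConsistent) {a : α}
    (ha : a ∈ E.grounded) : ∃ v, E.toADF.MinDecIn v a ∧
      tset v ⊆ E.charFun^[E.stage a] ∅ ∧ fset v ⊆ E.discarded E.grounded := by
  obtain ⟨N, hN, -⟩ := exists_grounded_eq_iterate (E := E)
  obtain ⟨v, hv, ht, hf⟩ := exists_minDecIn_of_forall hsc (a := a)
    (T := E.charFun^[E.stage a] ∅) (F := E.discarded (E.charFun^[E.stage a] ∅)) fun x hx => by
      by_cases hd : E.Defeats (E.charFun^[E.stage a] ∅) x a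
      · exact .inl (defends_iterate_stage ha x hd)
      · exact .inr (exists_subset_of_not_defeats hx hd)
  refine ⟨v, hv, ht, hf.trans ?_⟩
  rw [hN]
  exact monotone_discarded_iterate_charFun (stage_lt (hN ▸ ha)).le

theorem disjoint_grounded_discarded [Finite α] : Disjoint E.grounded (E.discarded E.grounded) :=
  conflictFree_grounded.disjoint_discarded

theorem exists_ranked_minDecIn_grounded [Finite α] (hsc : E.StronglyConsistent) :
    ∃ (v : α → Interp α) (ν : α → ℕ), ∀ a ∉ E.discarded E.grounded,
      E.toADF.MinDecIn (v a) a ∧ Disjoint (fset (v a)) E.grounded ∧ ∀ y ∈ tset (v a),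
        y ∉ E.discarded E.grounded ∧ (a ∈ E.grounded → y ∈ E.grounded) ∧ ν y < ν a := by
  obtain ⟨N, hN, -⟩ := exists_grounded_eq_iterate (E := E)
  have hstage : ∀ a ∈ E.grounded, E.stage a < N := fun a ha => stage_lt (hN ▸ ha)
  have hGW := disjoint_left.1 (disjoint_grounded_discarded (E := E))
  choose! u hu using fun a (ha : a ∈ E.grounded) => exists_minDecIn_of_mem_grounded hsc ha
  choose! w hw using fun a (ha : a ∉ E.discarded E.grounded) =>
    exists_minDecIn_of_not_mem_discarded hsc ha
  -- Stages rank the grounded extension below all other arguments it does not discard.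
  refine ⟨fun a => if a ∈ E.grounded then u a else w a,
    fun a => if a ∈ E.grounded then E.stage a else N + E.survivalRank E.grounded a,
    fun a ha => ?_⟩
  by_cases haG : a ∈ E.grounded
  · simp only [haG, if_true]
    refine ⟨(hu a haG).1, disjoint_of_subset_left (hu a haG).2.2 (disjoint_grounded_discarded).symm,
      fun y hy => ?_⟩
    have hyG : y ∈ E.grounded := subset_iUnion (fun i => E.charFun^[i] ∅) _ ((hu a haG).2.1 hy)
    exact ⟨hGW hyG, fun _ => hyG, by simpa [hyG] using stage_lt ((hu a haG).2.1 hy)⟩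
  · simp only [haG, if_false, false_imp_iff, true_and]
    refine ⟨(hw a ha).1, subset_compl_iff_disjoint_right.1 (hw a ha).2.1, fun y hy => ?_⟩
    by_cases hyG : y ∈ E.grounded
    · exact ⟨hGW hyG, by simpa [hyG] using (hstage y hyG).trans_le (N.le_add_right _)⟩
    · obtain ⟨hyd, hlt⟩ := ((hw a ha).2.2 y hy).resolve_left hyG
      exact ⟨hyd, by simpa [hyG] using hlt⟩

theorem aDiscarded_grounded [Finite α] (hsc : E.StronglyConsistent) :
    E.toADF.aDiscarded E.grounded = E.discarded E.grounded := by
  refine Subset.antisymm (fun b hb => ?_) (discarded_subset_aDiscarded hsc subset_rfl)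
  by_contra hbd
  obtain ⟨v, ν, hv⟩ := exists_ranked_minDecIn_grounded hsc
  obtain ⟨Fs, G, B, hev, hFs, hB⟩ := E.toADF.exists_paEval v ν (XF := ∅)
    (fun a ha => (hv a ha).1) (fun a ha y hy => ((hv a ha).2.2 y hy).1) (empty_subset _)
    (by simp) (fun a ha _ y hy => .inr ((hv a ha).2.2 y hy).2.2) (fun a ha => (hv a ha).2.1) hbd
  rw [subset_empty_iff] at hFs
  subst hFs
  exact (hb G B (E.toADF.paEval_univ exists_minDecIn hev)).ne_empty hB

theorem pdAcyclicCF_grounded [Finite α] (hsc : E.StronglyConsistent) :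
    E.toADF.PDAcyclicCF E.grounded := by
  intro a ha
  obtain ⟨v, ν, hv⟩ := exists_ranked_minDecIn_grounded hsc
  have hGW := disjoint_left.1 (disjoint_grounded_discarded (E := E))
  obtain ⟨Fs, G, B, hev, hFs, hB⟩ := E.toADF.exists_paEval v ν (XF := ∅)
    (fun a ha => (hv a (hGW ha)).1) (fun a ha y hy => ((hv a (hGW ha)).2.2 y hy).2.1 ha)
    (empty_subset _) (by simp) (fun a ha _ y hy => .inr ((hv a (hGW ha)).2.2 y hy).2.2)
    (fun a ha => (hv a (hGW ha)).2.1) ha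
  rw [subset_empty_iff] at hFs
  subst hFs
  exact ⟨G, B, hev, hB⟩

theorem aaComplete_grounded [Finite α] (hsc : E.StronglyConsistent) :
    E.toADF.AAComplete E.grounded := by
  obtain ⟨-, -, hfix⟩ := exists_grounded_eq_iterate (E := E)
  have hdec : ∀ e, E.toADF.DecisivelyIn (E.toADF.aRange E.grounded) e ↔ e ∈ E.grounded := by
    intro e
    rw [ADF.aRange, aDiscarded_grounded hsc,
      decisivelyIn_mkInterp_discarded_iff hsc conflictFree_grounded]
    exact Set.ext_iff.1 hfix e
  exact ⟨⟨pdAcyclicCF_grounded hsc, fun e he => (hdec e).2 he⟩, fun e he => (hdec e).1 he⟩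

theorem grounded_subset_of_aaComplete [Finite α] (hsc : E.StronglyConsistent) {Y : Set α}
    (hY : E.toADF.AAComplete Y) : E.grounded ⊆ Y := by
  refine iUnion_subset fun i => ?_
  induction i with
  | zero => exact empty_subset _
  | succ i ih =>
    intro a ha
    rw [Function.iterate_succ_apply'] at ha
    refine hY.2 a (toADF_decisivelyIn_of_forall _ a fun x hx => ?_)
    rw [ADF.aRange, tset_mkInterp, fset_mkInterp]
    by_cases hd : E.Defeats (E.charFun^[i] ∅) x a
    · have hxa := discarded_subset_aDiscarded hsc ih (ha x hd)
      have hxY : x ∉ Y := fun hxY => disjoint_left.1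
        (E.toADF.disjoint_aDiscarded_of_pdAcyclicCF exists_minDecIn hY.1.1) hxY hxa
      exact .inl ⟨⟨hxa, hxY⟩, hxY⟩
    · obtain ⟨C, hC, hD⟩ := exists_subset_of_not_defeats hx hd
      exact .inr ⟨C, hC.trans ih, hD⟩

theorem isAcyclicGrounded_iff [Finite α] (hsc : E.StronglyConsistent) (X : Set α) :
    E.toADF.IsAcyclicGrounded X ↔ X = E.grounded := by
  refine ⟨fun h => (h.2 _ (aaComplete_grounded hsc)).antisymm
    (grounded_subset_of_aaComplete hsc h.1), ?_⟩
  rintro rfl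
  exact ⟨aaComplete_grounded hsc, fun Y hY => grounded_subset_of_aaComplete hsc hY⟩

end EAFC

end Dialectical

open Dialectical in
/-- semantics correspondence between a strongly consistent EAFC and the
ca₂-family of semantics of its corresponding ADF. -/
theorem eafc_toADF_semantics
    {α : Type} [Fintype α] (E : EAFC α) (h : E.StronglyConsistent) (X : Set α) :
    (E.ConflictFree X ↔ E.toADF.ConflictFree X) ∧
    (E.Stable X ↔ E.toADF.IsModel X) ∧
    (X = E.grounded ↔ E.toADF.IsAcyclicGrounded X) ∧
    (E.Admissible X ↔ E.toADF.CA2Admissible X) ∧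
    (E.Complete X ↔ E.toADF.CA2Complete X) ∧
    (E.Preferred X ↔ E.toADF.CA2Preferred X) :=
  ⟨EAFC.conflictFree_iff X, EAFC.stable_iff X, (EAFC.isAcyclicGrounded_iff h X).symm,
    EAFC.admissible_iff h X, EAFC.complete_iff h X, EAFC.preferred_iff h X⟩
end

section
/- Let (A, R, N) be a strongly consistent AFN and ADF^FN = (A, L, C) its corresponding ADF. Then ADF^FN is a BADF, i.e. every link of ADF^FN is supporting or attacking. -/
open Classical

universe u

/-!
The acceptance condition of `fn.toADF` at `s` rejects `P` exactly when `P` contains an attacker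
of `s` or misses one of its necessity sets. Adding an attacker `r` to `P` therefore forces
rejection, so every link from an attacker is attacking; adding any other argument can neither
introduce an attacker nor make a necessity set missed, so every remaining link is supporting.
-/

namespace Dialectical.AFN

variable {α : Type u} (fn : AFN α)

theorem toADF_C_eq_false_iff {a : α} {P : Set α} :
    fn.toADF.C a P = false ↔ (∃ p ∈ P, fn.R p a) ∨ ∃ Z, fn.N Z a ∧ Z ∩ P = ∅ := by
  simp only [toADF, decide_eq_false_iff_not, not_not]

theorem toADF_C_union_singleton_of_R {r s : α} (hr : fn.R r s) (P : Set α) :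
    fn.toADF.C s (P ∪ {r}) = false :=
  fn.toADF_C_eq_false_iff.2 (Or.inl ⟨r, Or.inr rfl, hr⟩)

theorem toADF_C_eq_false_of_union_singleton {r s : α} (hr : ¬ fn.R r s) {P : Set α}
    (h : fn.toADF.C s (P ∪ {r}) = false) : fn.toADF.C s P = false := by
  rw [toADF_C_eq_false_iff] at h ⊢
  rcases h with ⟨p, hp | rfl, hps⟩ | ⟨Z, hZ, hZP⟩
  · exact Or.inl ⟨p, hp, hps⟩
  · exact absurd hps hr
  · refine Or.inr ⟨Z, hZ, Set.subset_empty_iff.1 ?_⟩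
    exact hZP ▸ Set.inter_subset_inter_right Z Set.subset_union_left

theorem toADF_attacking_of_R {r s : α} (hr : fn.R r s) : fn.toADF.Attacking r s :=
  fun ⟨R', _, _, hin⟩ =>
    Bool.false_ne_true ((fn.toADF_C_union_singleton_of_R hr R').symm.trans hin)

theorem toADF_supporting_of_not_R {r s : α} (hr : ¬ fn.R r s) : fn.toADF.Supporting r s :=
  fun ⟨_, _, hin, hout⟩ =>
    Bool.false_ne_true ((fn.toADF_C_eq_false_of_union_singleton hr hout).symm.trans hin)

end Dialectical.AFN

open Dialectical in
theorem afn_toADF_isBADF_general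
    {α : Type} (fn : AFN α) :
    fn.toADF.IsBADF := by
  intro r s _
  by_cases hr : fn.R r s
  · exact Or.inr (fn.toADF_attacking_of_R hr)
  · exact Or.inl (fn.toADF_supporting_of_not_R hr)

open Dialectical in
/-- the ADF corresponding to a strongly consistent AFN is a BADF. -/
theorem afn_toADF_isBADF
    {α : Type} [Fintype α] (fn : AFN α) (h : fn.StronglyConsistent) :
    fn.toADF.IsBADF :=
  afn_toADF_isBADF_general fn
end
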